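/- arXiv:2012.09063 — 4 statements merged into one kernel-verified Lean document; each statement's English description precedes it below -/
import Mathlib

section
/- Let f* > 0, 0 < η ≤ 1, and let κ_1, ..., κ_p be nonnegative reals satisfying p·κ_j ≥ η·(f* - (κ_1 + ... + κ_{j-1})) for all j = 1, ..., p. Then κ_1 + ... + κ_p ≥ f* · (1 - ((p-η)/p)^p). -/
/-!
The uncovered reward `fstar - (κ 1 + ⋯ + κ j)` shrinks by a factor of at least `(p - η) / p` at
every iteration, since the oracle covers an `η / p` share of it; after `p` iterations at most
`fstar * ((p - η) / p) ^ p` is left uncovered.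
-/

open Finset

lemma sub_le_div_mul_of_le_mul {a η k R : ℝ} (ha : 0 < a) (h : η * R ≤ a * k) :
    R - k ≤ (a - η) / a * R := by
  rw [div_mul_eq_mul_div, le_div_iff₀ ha]
  linarith

theorem pseudo_greedy_sum_lower_bound_general (p : ℕ) (hp : 1 ≤ p) (fstar : ℝ)
    (η : ℝ) (hη1 : η ≤ 1)
    (κ : ℕ → ℝ)
    (hrec : ∀ j, 1 ≤ j → j ≤ p →
      (p : ℝ) * κ j ≥ η * (fstar - ∑ l ∈ Finset.Ico 1 j, κ l)) :
    ∑ j ∈ Finset.Icc 1 p, κ j ≥ fstar * (1 - (((p : ℝ) - η) / (p : ℝ)) ^ p) := by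
  have hp0 : (0 : ℝ) < p := by exact_mod_cast hp
  have hc : 0 ≤ ((p : ℝ) - η) / p := by
    have : (1 : ℝ) ≤ p := by exact_mod_cast hp
    exact div_nonneg (by linarith) hp0.le
  have hshrink := le_geom (u := fun j ↦ fstar - ∑ l ∈ Icc 1 j, κ l) hc p fun k hk ↦ by
    have hcover := hrec (k + 1) (by omega) hk
    rw [Ico_add_one_right_eq_Icc] at hcover
    simpa only [sum_Icc_succ_top (by omega : 1 ≤ k + 1), sub_add_eq_sub_sub]
      using sub_le_div_mul_of_le_mul hp0 hcover
  simp only [Icc_eq_empty_of_lt zero_lt_one, sum_empty, sub_zero] at hshrink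
  linarith

theorem pseudo_greedy_sum_lower_bound (p : ℕ) (hp : 1 ≤ p) (fstar : ℝ) (hf : 0 < fstar)
    (η : ℝ) (hη0 : 0 < η) (hη1 : η ≤ 1)
    (κ : ℕ → ℝ) (hκ : ∀ j, 0 ≤ κ j)
    (hrec : ∀ j, 1 ≤ j → j ≤ p →
      (p : ℝ) * κ j ≥ η * (fstar - ∑ l ∈ Finset.Ico 1 j, κ l)) :
    ∑ j ∈ Finset.Icc 1 p, κ j ≥ fstar * (1 - (((p : ℝ) - η) / (p : ℝ)) ^ p) :=
  pseudo_greedy_sum_lower_bound_general p hp fstar η hη1 κ hrec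
end

section
/- Under the hypothesis p·ψ_j ≥ f* - Σ_{l<j} ψ_l for all j ≤ k (with ψ_l ≥ 0, f* ≥ 0), the partial sums satisfy p · Σ_{l=1}^{k} ψ_l ≥ f* · Σ_{i=0}^{k-1} ((p-1)/p)^i for every k = 1, ..., p. -/
/-! With `r = (c - 1) / c`, the hypothesis at step `k + 1` gives
`c * S (k + 1) ≥ f + (c - 1) * S k = f + r * (c * S k)` for the partial sums `S`, so a lower
bound `f * G` on `c * S k` becomes the lower bound `f * (r * G + 1)` on `c * S (k + 1)`: exactly
the recursion of the geometric sums `∑ i < k, r ^ i`. -/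

open Finset

theorem mul_add_ge_of_mul_ge_sub {c f S ψ G : ℝ} (hc : 1 ≤ c) (hS : c * S ≥ f * G)
    (hψ : c * ψ ≥ f - S) : c * (S + ψ) ≥ f * ((c - 1) / c * G + 1) := by
  have hr : 0 ≤ (c - 1) / c := div_nonneg (by linarith) (by linarith)
  have hcS : (c - 1) / c * (c * S) = (c - 1) * S := by field_simp
  calc c * (S + ψ) = c * ψ + c * S := by ring
    _ ≥ f + (c - 1) / c * (c * S) := by linarith
    _ ≥ f + (c - 1) / c * (f * G) := by gcongr
    _ = f * ((c - 1) / c * G + 1) := by ring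

theorem mul_sum_Icc_ge_mul_geom_sum {c f : ℝ} (hc : 1 ≤ c) (ψ : ℕ → ℝ) (k : ℕ)
    (h : ∀ j, 1 ≤ j → j ≤ k → c * ψ j ≥ f - ∑ l ∈ Ico 1 j, ψ l) :
    c * ∑ l ∈ Icc 1 k, ψ l ≥ f * ∑ i ∈ range k, ((c - 1) / c) ^ i := by
  induction k with
  | zero => simp
  | succ k ih =>
    rw [sum_Icc_succ_top (by omega), geom_sum_succ]
    exact mul_add_ge_of_mul_ge_sub hc (ih fun j hj1 hjk => h j hj1 (by omega))
      (h (k + 1) (by omega) le_rfl)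

theorem greedy_partial_sum_geometric_general (p : ℕ) (hp : 1 ≤ p) (fstar : ℝ)
    (ψ : ℕ → ℝ) (k : ℕ)
    (hrec : ∀ j, 1 ≤ j → j ≤ k →
      (p : ℝ) * ψ j ≥ fstar - ∑ l ∈ Finset.Ico 1 j, ψ l) :
    (p : ℝ) * ∑ l ∈ Finset.Icc 1 k, ψ l ≥
      fstar * ∑ i ∈ Finset.range k, (((p : ℝ) - 1) / (p : ℝ)) ^ i :=
  mul_sum_Icc_ge_mul_geom_sum (by exact_mod_cast hp) ψ k hrec

theorem greedy_partial_sum_geometric (p : ℕ) (hp : 1 ≤ p) (fstar : ℝ) (hf : 0 ≤ fstar)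
    (ψ : ℕ → ℝ) (hψ : ∀ j, 0 ≤ ψ j) (k : ℕ) (hk1 : 1 ≤ k) (hkp : k ≤ p)
    (hrec : ∀ j, 1 ≤ j → j ≤ k →
      (p : ℝ) * ψ j ≥ fstar - ∑ l ∈ Finset.Ico 1 j, ψ l) :
    (p : ℝ) * ∑ l ∈ Finset.Icc 1 k, ψ l ≥
      fstar * ∑ i ∈ Finset.range k, (((p : ℝ) - 1) / (p : ℝ)) ^ i :=
  greedy_partial_sum_geometric_general p hp fstar ψ k hrec
end

section
/- For the one-dimensional maximum coverage problem with a single facility: given finitely many weighted intervals [a_i, a_i + w_i] with weights v_i ≥ 0 and a facility interval [x, x + w] of fixed width w > 0, the total covered reward F(x) = Σ_i v_i · length([x, x+w] ∩ [a_i, a_i + w_i]) attains its maximum over x ∈ ℝ at some point of the finite set {a_i : i} ∪ {a_i + w_i - w : i}. -/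
/-!
The covered length `x ↦ |[x, x + w] ∩ [a, b]|` is `max (min (x + w) b - max x a) 0`. Between two
consecutive inner critical values neither `min` nor `max` switches branch, so it is the positive
part of an affine function there, hence convex; left of all of them it is nondecreasing and right of
all of them nonincreasing. A nonnegative combination keeps these properties, and a function of
this shape is maximised at a critical value: on each gap by the maximum principle for convex
functions, outside by monotonicity.
-/

open MeasureTheory Set

theorem convexOn_finset_sum {ι : Type*} {s : Set ℝ} (hs : Convex ℝ s) (t : Finset ι)
    {f : ι → ℝ → ℝ} (hf : ∀ i ∈ t, ConvexOn ℝ s (f i)) :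
    ConvexOn ℝ s fun x => ∑ i ∈ t, f i x := by
  classical
  induction t using Finset.induction_on with
  | empty => simpa using convexOn_const (0 : ℝ) hs
  | insert j t hj ih =>
    simp only [Finset.sum_insert hj]
    exact (hf j (Finset.mem_insert_self j t)).add
      (ih fun i hi => hf i (Finset.mem_insert_of_mem hi))

theorem Set.Finite.exists_mem_Icc_disjoint_Ioo {S : Set ℝ} (hS : S.Finite) {x : ℝ}
    (hlow : x ∉ lowerBounds S) (hup : x ∉ upperBounds S) :
    ∃ l ∈ S, ∃ r ∈ S, x ∈ Icc l r ∧ Disjoint (Ioo l r) S := by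
  simp only [mem_lowerBounds, mem_upperBounds, not_forall, not_le, exists_prop] at hlow hup
  obtain ⟨l, ⟨hlS, hlx⟩, hl⟩ :=
    (S ∩ Iic x).exists_max_image id (hS.inter_of_left _) (hlow.imp fun _ h => ⟨h.1, h.2.le⟩)
  obtain ⟨r, ⟨hrS, hxr⟩, hr⟩ :=
    (S ∩ Ici x).exists_min_image id (hS.inter_of_left _) (hup.imp fun _ h => ⟨h.1, h.2.le⟩)
  refine ⟨l, hlS, r, hrS, ⟨hlx, hxr⟩, disjoint_right.2 fun c hc hlr => ?_⟩
  rcases le_total c x with hcx | hxc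
  · exact (hl c ⟨hc, hcx⟩).not_gt hlr.1
  · exact (hr c ⟨hc, hxc⟩).not_gt hlr.2

theorem Set.Finite.exists_forall_le_of_convexOn_gaps {S : Set ℝ} (hS : S.Finite)
    (hne : S.Nonempty) {f : ℝ → ℝ} (hmono : MonotoneOn f (lowerBounds S))
    (hanti : AntitoneOn f (upperBounds S))
    (hconv : ∀ l ∈ S, ∀ r ∈ S, Disjoint (Ioo l r) S → ConvexOn ℝ (Icc l r) f) :
    ∃ s ∈ S, ∀ x, f x ≤ f s := by
  obtain ⟨s, hs, hmax⟩ := S.exists_max_image f hS hne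
  refine ⟨s, hs, fun x => ?_⟩
  by_cases hlow : x ∈ lowerBounds S
  · obtain ⟨m, hm, hmin⟩ := S.exists_min_image id hS hne
    exact (hmono hlow (fun y hy => hmin y hy) (hlow hm)).trans (hmax m hm)
  by_cases hup : x ∈ upperBounds S
  · obtain ⟨m, hm, hmax'⟩ := S.exists_max_image id hS hne
    exact (hanti (fun y hy => hmax' y hy) hup (hup hm)).trans (hmax m hm)
  obtain ⟨l, hl, r, hr, hx, hgap⟩ := hS.exists_mem_Icc_disjoint_Ioo hlow hup
  have hlr : l ≤ r := hx.1.trans hx.2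
  calc f x ≤ max (f l) (f r) :=
        (hconv l hl r hr hgap).le_max_of_mem_Icc (left_mem_Icc.2 hlr) (right_mem_Icc.2 hlr) hx
    _ ≤ f s := max_le (hmax l hl) (hmax r hr)

theorem exists_eqOn_min_add_affine {w b l r : ℝ} (hb : b - w ∉ Ioo l r) :
    ∃ c d : ℝ, EqOn (fun x => min (x + w) b) (fun x => c * x + d) (Icc l r) := by
  rcases not_and_or.1 hb with hbl | hrb
  · exact ⟨0, b, fun x hx => by simpa using min_eq_right (by linarith [hx.1] : b ≤ x + w)⟩
  · exact ⟨1, w, fun x hx => by simpa [add_comm] using min_eq_left (by linarith [hx.2] : x + w ≤ b)⟩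

theorem exists_eqOn_max_affine {a l r : ℝ} (ha : a ∉ Ioo l r) :
    ∃ c d : ℝ, EqOn (fun x => max x a) (fun x => c * x + d) (Icc l r) := by
  rcases not_and_or.1 ha with hal | hra
  · exact ⟨1, 0, fun x hx => by simpa using max_eq_left (by linarith [hx.1] : a ≤ x)⟩
  · exact ⟨0, a, fun x hx => by simpa using max_eq_right (by linarith [hx.2] : x ≤ a)⟩

theorem volume_Icc_inter_Icc_toReal (x y a b : ℝ) :
    (volume (Icc x y ∩ Icc a b)).toReal = max (min y b - max x a) 0 := by
  rw [Icc_inter_Icc, Real.volume_Icc, ENNReal.toReal_ofReal']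

theorem monotoneOn_volume_Icc_inter_Icc (w a b : ℝ) :
    MonotoneOn (fun x => (volume (Icc x (x + w) ∩ Icc a b)).toReal) (lowerBounds {a, b - w}) := by
  intro x hx y hy hxy
  simp only [lowerBounds_insert, lowerBounds_singleton, mem_inter_iff, mem_Iic] at hx hy
  simp only [volume_Icc_inter_Icc_toReal, max_eq_right hx.1, max_eq_right hy.1,
    min_eq_left (by linarith : x + w ≤ b), min_eq_left (by linarith : y + w ≤ b)]
  exact max_le_max (by linarith) le_rfl

theorem antitoneOn_volume_Icc_inter_Icc (w a b : ℝ) :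
    AntitoneOn (fun x => (volume (Icc x (x + w) ∩ Icc a b)).toReal) (upperBounds {a, b - w}) := by
  intro x hx y hy hxy
  simp only [upperBounds_insert, upperBounds_singleton, mem_inter_iff, mem_Ici] at hx hy
  simp only [volume_Icc_inter_Icc_toReal, max_eq_left hx.1, max_eq_left hy.1,
    min_eq_right (by linarith : b ≤ x + w), min_eq_right (by linarith : b ≤ y + w)]
  exact max_le_max (by linarith) le_rfl

theorem convexOn_volume_Icc_inter_Icc {w a b l r : ℝ} (hgap : Disjoint (Ioo l r) {a, b - w}) :
    ConvexOn ℝ (Icc l r) fun x => (volume (Icc x (x + w) ∩ Icc a b)).toReal := by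
  obtain ⟨c₁, d₁, hmin⟩ := exists_eqOn_min_add_affine (w := w) (b := b)
    (disjoint_right.1 hgap (mem_insert_of_mem _ rfl))
  obtain ⟨c₂, d₂, hmax⟩ := exists_eqOn_max_affine (disjoint_right.1 hgap (mem_insert a _))
  have hconv : ConvexOn ℝ (Icc l r) fun x => max ((c₁ - c₂) * x + (d₁ - d₂)) 0 :=
    (((LinearMap.mulLeft ℝ (c₁ - c₂)).convexOn (convex_Icc l r)).add_const _).sup
      (convexOn_const 0 (convex_Icc l r))
  refine hconv.congr fun x hx => ?_
  simp only [volume_Icc_inter_Icc_toReal, hmin hx, hmax hx]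
  congr 1
  ring

theorem oneD_single_facility_max_at_inner_DCV_general (n : ℕ) (hn : 0 < n)
    (a wi : Fin n → ℝ) (v : Fin n → ℝ) (hv : ∀ i, 0 ≤ v i)
    (w : ℝ) :
    ∃ xstar : ℝ,
      (xstar ∈ Set.range a ∪ Set.range (fun i => a i + wi i - w)) ∧
      ∀ x : ℝ,
        (∑ i, v i * (volume (Set.Icc x (x + w) ∩ Set.Icc (a i) (a i + wi i))).toReal) ≤
        (∑ i, v i * (volume (Set.Icc xstar (xstar + w) ∩ Set.Icc (a i) (a i + wi i))).toReal) := by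
  set S := Set.range a ∪ Set.range (fun i => a i + wi i - w)
  have hsub : ∀ i, {a i, a i + wi i - w} ⊆ S := fun i =>
    insert_subset_iff.2 ⟨Or.inl ⟨i, rfl⟩, singleton_subset_iff.2 (Or.inr ⟨i, rfl⟩)⟩
  refine ((finite_range a).union (finite_range _)).exists_forall_le_of_convexOn_gaps
    ⟨a ⟨0, hn⟩, Or.inl ⟨_, rfl⟩⟩ ?_ ?_ ?_
  · intro x hx y hy hxy
    exact Finset.sum_le_sum fun i _ => mul_le_mul_of_nonneg_left
      (monotoneOn_volume_Icc_inter_Icc w _ _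
        (lowerBounds_mono_set (hsub i) hx) (lowerBounds_mono_set (hsub i) hy) hxy) (hv i)
  · intro x hx y hy hxy
    exact Finset.sum_le_sum fun i _ => mul_le_mul_of_nonneg_left
      (antitoneOn_volume_Icc_inter_Icc w _ _
        (upperBounds_mono_set (hsub i) hx) (upperBounds_mono_set (hsub i) hy) hxy) (hv i)
  · exact fun l _ r _ hgap => convexOn_finset_sum (convex_Icc l r) _ fun i _ =>
      (convexOn_volume_Icc_inter_Icc (hgap.mono_right (hsub i))).smul (hv i)

theorem oneD_single_facility_max_at_inner_DCV (n : ℕ) (hn : 0 < n)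
    (a wi : Fin n → ℝ) (v : Fin n → ℝ) (hv : ∀ i, 0 ≤ v i) (hwi : ∀ i, 0 < wi i)
    (w : ℝ) (hw : 0 < w) :
    ∃ xstar : ℝ,
      (xstar ∈ Set.range a ∪ Set.range (fun i => a i + wi i - w)) ∧
      ∀ x : ℝ,
        (∑ i, v i * (volume (Set.Icc x (x + w) ∩ Set.Icc (a i) (a i + wi i))).toReal) ≤
        (∑ i, v i * (volume (Set.Icc xstar (xstar + w) ∩ Set.Icc (a i) (a i + wi i))).toReal) :=
  oneD_single_facility_max_at_inner_DCV_general n hn a wi v hv w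
end

section
/- Let f(x) = Σ_{j=1}^{p} v · length([x + c_j, x + c_j + w] ∩ [a, a + W]) where c_1, ..., c_p are fixed offsets and the p intervals [x + c_j, x + c_j + w] may overlap; define g(x) = v · length((∪_j [x + c_j, x + c_j + w]) ∩ [a, a + W]). Then g is continuous piecewise linear in x, and every breakpoint x̂ of g satisfies x̂ + c_j ∈ {a - w, a, a + W - w, a + W} for some j. -/
/-!
Write `S = ⋃ j, [c j, c j + w]` and `F t = |S ∩ (-∞, t]|`. Translating by `-x` gives
`g x = v * (F (a + W - x) - F (a - x))`. The function `F` is `1`-Lipschitz, and on an open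
interval inside `S` (resp. outside `S`) it has slope `1` (resp. `0`). So `g` is continuous, and it
is affine near every `x` for which neither `a - x` nor `a + W - x` lies on the frontier of `S`,
and that frontier consists of endpoints `c j`, `c j + w`.
-/

open Set Topology MeasureTheory
open scoped ENNReal

theorem frontier_iUnion_Icc_subset {ι : Type*} [Finite ι] (l r : ι → ℝ) :
    frontier (⋃ i, Icc (l i) (r i)) ⊆ ⋃ i, {l i, r i} := by
  intro t ht
  have hclosed : IsClosed (⋃ i, Icc (l i) (r i)) :=
    isClosed_iUnion_of_finite fun _ => isClosed_Icc
  obtain ⟨i, hl, hr⟩ := mem_iUnion.1 (hclosed.frontier_subset ht)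
  refine mem_iUnion.2 ⟨i, ?_⟩
  by_contra hne
  simp only [mem_insert_iff, mem_singleton_iff, not_or] at hne
  have hint : t ∈ interior (⋃ i, Icc (l i) (r i)) := by
    refine interior_mono (subset_iUnion _ i) ?_
    rw [interior_Icc]
    exact ⟨lt_of_le_of_ne hl (Ne.symm hne.1), lt_of_le_of_ne hr hne.2⟩
  exact disjoint_left.1 disjoint_interior_frontier hint ht

theorem measureReal_preimage_neg_add_inter_Icc (S : Set ℝ) (x a b : ℝ) :
    volume.real ((fun t => -x + t) ⁻¹' S ∩ Icc a b) =
      volume.real (S ∩ Icc (a - x) (b - x)) := by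
  rw [Measure.real, Measure.real, ← measure_preimage_add volume (-x) (S ∩ Icc (a - x) (b - x)),
    preimage_inter, preimage_const_add_Icc, sub_neg_eq_add, sub_neg_eq_add, sub_add_cancel,
    sub_add_cancel]

noncomputable def volumeIic (S : Set ℝ) (t : ℝ) : ℝ := volume.real (S ∩ Iic t)

section volumeIic

variable {S : Set ℝ} {t s : ℝ}

theorem volumeIic_sub_volumeIic (hS : MeasurableSet S) (hfin : volume S ≠ ∞) (hts : t ≤ s) :
    volumeIic S s - volumeIic S t = volume.real (S ∩ Ioc t s) := by
  have hsplit : S ∩ Iic s = S ∩ Iic t ∪ S ∩ Ioc t s := by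
    rw [← inter_union_distrib_left, Iic_union_Ioc_eq_Iic hts]
  have hdisj : Disjoint (S ∩ Iic t) (S ∩ Ioc t s) :=
    (Iic_disjoint_Ioc le_rfl).mono inter_subset_right inter_subset_right
  rw [volumeIic, volumeIic, hsplit, measureReal_union hdisj (hS.inter measurableSet_Ioc)
    (measure_ne_top_of_subset inter_subset_left hfin)
    (measure_ne_top_of_subset inter_subset_left hfin), add_sub_cancel_left]

theorem measureReal_inter_Icc_eq_volumeIic_sub (hS : MeasurableSet S) (hfin : volume S ≠ ∞)
    (hts : t ≤ s) :
    volume.real (S ∩ Icc t s) = volumeIic S s - volumeIic S t := by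
  rw [volumeIic_sub_volumeIic hS hfin hts,
    measureReal_congr ((ae_eq_refl S).inter Ioc_ae_eq_Icc.symm)]

theorem lipschitzWith_volumeIic (hS : MeasurableSet S) (hfin : volume S ≠ ∞) :
    LipschitzWith 1 (volumeIic S) := by
  refine LipschitzWith.of_le_add fun s t => ?_
  rcases le_total t s with hts | hst
  · have h := volumeIic_sub_volumeIic hS hfin hts
    have hle : volume.real (S ∩ Ioc t s) ≤ s - t := by
      rw [← Real.volume_real_Ioc_of_le hts]
      exact measureReal_mono inter_subset_right measure_Ioc_lt_top.ne
    rw [Real.dist_eq, abs_of_nonneg (sub_nonneg.2 hts)]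
    linarith
  · have h := volumeIic_sub_volumeIic hS hfin hst
    linarith [measureReal_nonneg (μ := volume) (s := S ∩ Ioc s t), dist_nonneg (x := s) (y := t)]

theorem volumeIic_eq_of_Ioo_subset (hS : MeasurableSet S) (hfin : volume S ≠ ∞) {l r u : ℝ}
    (hlr : Ioo l r ⊆ S) (hu : u ∈ Ioo l r) :
    volumeIic S u = u + (volumeIic S l - l) := by
  have h := volumeIic_sub_volumeIic hS hfin hu.1.le
  rw [inter_eq_right.2 ((Ioc_subset_Ioo_right hu.2).trans hlr),
    Real.volume_real_Ioc_of_le hu.1.le] at h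
  linarith

theorem volumeIic_eq_of_disjoint_Ioo (hS : MeasurableSet S) (hfin : volume S ≠ ∞) {l r u : ℝ}
    (hlr : Disjoint S (Ioo l r)) (hu : u ∈ Ioo l r) :
    volumeIic S u = volumeIic S l := by
  have h := volumeIic_sub_volumeIic hS hfin hu.1.le
  rw [(hlr.mono_right (Ioc_subset_Ioo_right hu.2)).inter_eq, measureReal_empty] at h
  linarith

theorem exists_eventually_volumeIic_eq_affine (hS : MeasurableSet S) (hfin : volume S ≠ ∞)
    (ht : t ∉ frontier S) :
    ∃ α β : ℝ, ∀ᶠ u in 𝓝 t, volumeIic S u = α * u + β := by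
  by_cases hint : t ∈ interior S
  · obtain ⟨l, r, htlr, hlr⟩ :=
      mem_nhds_iff_exists_Ioo_subset.1 (mem_interior_iff_mem_nhds.1 hint)
    refine ⟨1, volumeIic S l - l, ?_⟩
    filter_upwards [Ioo_mem_nhds htlr.1 htlr.2] with u hu
    rw [volumeIic_eq_of_Ioo_subset hS hfin hlr hu, one_mul]
  · have hext : t ∈ interior Sᶜ := by
      rw [interior_compl]
      exact fun hcl => ht ⟨hcl, hint⟩
    obtain ⟨l, r, htlr, hlr⟩ :=
      mem_nhds_iff_exists_Ioo_subset.1 (mem_interior_iff_mem_nhds.1 hext)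
    refine ⟨0, volumeIic S l, ?_⟩
    filter_upwards [Ioo_mem_nhds htlr.1 htlr.2] with u hu
    rw [volumeIic_eq_of_disjoint_Ioo hS hfin (subset_compl_iff_disjoint_left.1 hlr) hu, zero_mul,
      zero_add]

end volumeIic

theorem union_translated_intervals_coverage_piecewise_linear_general (p : ℕ)
    (c : Fin p → ℝ) (v w a W : ℝ) (hW : 0 < W)
    (g : ℝ → ℝ)
    (hg : g = fun x : ℝ => v *
      (volume ((⋃ j, Set.Icc (x + c j) (x + c j + w)) ∩ Set.Icc a (a + W))).toReal) :
    Continuous g ∧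
    ∀ x : ℝ, (∀ j : Fin p, x + c j ∉ ({a - w, a, a + W - w, a + W} : Set ℝ)) →
      ∃ δ > 0, ∃ α β : ℝ, ∀ y ∈ Set.Ioo (x - δ) (x + δ), g y = α * y + β := by
  set S := ⋃ j, Icc (c j) (c j + w)
  have hSc : IsCompact S := isCompact_iUnion fun _ => isCompact_Icc
  have hS : MeasurableSet S := hSc.isClosed.measurableSet
  have hfin : volume S ≠ ∞ := hSc.measure_lt_top.ne
  have hgF : g = fun x => v * (volumeIic S (a + W - x) - volumeIic S (a - x)) := by
    have htranslate (x : ℝ) :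
        ⋃ j, Icc (x + c j) (x + c j + w) = (fun t => -x + t) ⁻¹' S := by
      simp [S, preimage_iUnion, add_comm, add_left_comm]
    ext x
    simp only [hg, htranslate, ← Measure.real_def]
    rw [measureReal_preimage_neg_add_inter_Icc,
      measureReal_inter_Icc_eq_volumeIic_sub hS hfin (by linarith)]
  have hF := (lipschitzWith_volumeIic hS hfin).continuous
  refine ⟨by rw [hgF]; fun_prop, fun x hx => ?_⟩
  have hfrontier {b : ℝ} (hb : b = a ∨ b = a + W) : b - x ∉ frontier S := fun hbx => by
    obtain ⟨j, hj⟩ := mem_iUnion.1 (frontier_iUnion_Icc_subset _ _ hbx)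
    refine hx j ?_
    simp only [mem_insert_iff, mem_singleton_iff] at hj ⊢
    grind
  obtain ⟨α₁, β₁, h₁⟩ :=
    exists_eventually_volumeIic_eq_affine hS hfin (hfrontier (.inl rfl))
  obtain ⟨α₂, β₂, h₂⟩ :=
    exists_eventually_volumeIic_eq_affine hS hfin (hfrontier (.inr rfl))
  have hg_affine : ∀ᶠ y in 𝓝 x,
      g y = v * (α₁ - α₂) * y + v * (α₂ * (a + W) + β₂ - α₁ * a - β₁) := by
    filter_upwards [((continuous_sub_left a).tendsto x).eventually h₁,
      ((continuous_sub_left (a + W)).tendsto x).eventually h₂] with y hy₁ hy₂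
    simp only [hgF, hy₁, hy₂]
    ring
  obtain ⟨δ, hδ, hball⟩ := Metric.eventually_nhds_iff_ball.1 hg_affine
  exact ⟨δ, hδ, _, _, fun y hy => hball y (by rwa [Real.ball_eq_Ioo])⟩

theorem union_translated_intervals_coverage_piecewise_linear (p : ℕ)
    (c : Fin p → ℝ) (v w a W : ℝ) (hv : 0 ≤ v) (hw : 0 < w) (hW : 0 < W)
    (g : ℝ → ℝ)
    (hg : g = fun x : ℝ => v *
      (volume ((⋃ j, Set.Icc (x + c j) (x + c j + w)) ∩ Set.Icc a (a + W))).toReal) :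
    Continuous g ∧
    ∀ x : ℝ, (∀ j : Fin p, x + c j ∉ ({a - w, a, a + W - w, a + W} : Set ℝ)) →
      ∃ δ > 0, ∃ α β : ℝ, ∀ y ∈ Set.Ioo (x - δ) (x + δ), g y = α * y + β :=
  union_translated_intervals_coverage_piecewise_linear_general p c v w a W hW g hg
end
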